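/- arXiv:1905.13732 — 2 statements merged into one kernel-verified Lean document; each statement's English description precedes it below -/
import Mathlib

section
/- Let x_1,…,x_n ∈ ℝ^p and μ_1,…,μ_K ∈ ℝ^p with x_j ≠ μ_k for all j,k, let β > 0, and define the soft cluster assignments r_{jk} = exp(−β‖x_j − μ_k‖)/∑_{ℓ=1}^K exp(−β‖x_j − μ_ℓ‖) (Euclidean norm) and the map f : ℝ^{K·p} → ℝ^{K·p} with components f_{i,ℓ}(μ) = μ_i^ℓ − (∑_{j=1}^n r_{ji} x_j^ℓ)/(∑_{j=1}^n r_{ji}). Suppose ‖x_j‖_1 ≤ 1 for all j; for every point j, ‖x_j − μ_i‖ − ‖x_j − μ_{c(j)}‖ ≥ δ for all i ≠ c(j), where c(j) = argmax_i r_{ji}; for every cluster i, ∑_{j=1}^n r_{ji} ≥ αn; and βδ > log(2βK²/α). Then the Jacobian ∂f/∂μ (a (Kp)×(Kp) matrix) satisfies ‖∂f/∂μ − I‖_1 ≤ exp(−δβ) · K²β / (α/2 − K²β·exp(−δβ)), where ‖·‖_1 denotes the operator norm induced by the ℓ1 vector norm. -/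
set_option maxHeartbeats 2000000
open Real Finset

theorem myDiv {E : Type*} [NormedAddCommGroup E] [NormedSpace ℝ E] {c d : E → ℝ}
    {c' d' : E →L[ℝ] ℝ} {x : E} (hc : HasFDerivAt c c' x) (hd : HasFDerivAt d d' x)
    (hx : d x ≠ 0) :
    HasFDerivAt (fun y => c y / d y) (c x • ((-(d x ^ 2)⁻¹) • d') + (d x)⁻¹ • c') x := by
  have hinv : HasFDerivAt (fun y => (d y)⁻¹) ((-(d x ^ 2)⁻¹) • d') x :=
    (hasDerivAt_inv hx).comp_hasFDerivAt x hd
  simpa [div_eq_mul_inv] using hc.fun_mul hinv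

theorem myLip {p : ℕ} (xj : EuclideanSpace ℝ (Fin p)) :
    LipschitzWith 1 (fun y : EuclideanSpace ℝ (Fin p) => ‖xj - y‖) := by
  refine LipschitzWith.of_dist_le_mul fun y z => ?_
  rw [Real.dist_eq, NNReal.coe_one, one_mul, dist_eq_norm]
  calc |‖xj - y‖ - ‖xj - z‖| ≤ ‖(xj - y) - (xj - z)‖ := abs_norm_sub_norm_le _ _
  _ = ‖y - z‖ := by rw [sub_sub_sub_cancel_left, norm_sub_rev]

set_option maxHeartbeats 1000000 in
theorem aux_r {K p : ℕ} (xj : EuclideanSpace ℝ (Fin p))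
    (μ : Fin K → EuclideanSpace ℝ (Fin p)) (β : ℝ) (hβ : 0 < β)
    (hx : ∀ ℓ, xj ≠ μ ℓ) (k i : Fin K) (m : Fin p) :
    ∃ L : (Fin K → EuclideanSpace ℝ (Fin p)) →L[ℝ] ℝ,
      HasFDerivAt (fun μ' => Real.exp (-β * ‖xj - μ' i‖) /
          ∑ ℓ, Real.exp (-β * ‖xj - μ' ℓ‖)) L μ ∧
      |L (Pi.single k (EuclideanSpace.single m (1:ℝ)))| ≤
        β * ((Real.exp (-β * ‖xj - μ k‖) / ∑ ℓ, Real.exp (-β * ‖xj - μ ℓ‖)) *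
          |(if i = k then (1:ℝ) else 0) -
            Real.exp (-β * ‖xj - μ i‖) / ∑ ℓ, Real.exp (-β * ‖xj - μ ℓ‖)|) := by
  haveI : Nonempty (Fin K) := ⟨k⟩
  set v : Fin K → EuclideanSpace ℝ (Fin p) := Pi.single k (EuclideanSpace.single m (1:ℝ)) with hv
  set Ψ : Fin K → ((Fin K → EuclideanSpace ℝ (Fin p)) →L[ℝ] ℝ) := fun ℓ =>
    (fderiv ℝ (fun y : EuclideanSpace ℝ (Fin p) => ‖xj - y‖) (μ ℓ)).comp (ContinuousLinearMap.proj ℓ) with hΨ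
  have hg : ∀ ℓ, HasFDerivAt (fun μ' : Fin K → EuclideanSpace ℝ (Fin p) => ‖xj - μ' ℓ‖) (Ψ ℓ) μ := by
    intro ℓ
    have hd : DifferentiableAt ℝ (fun y : EuclideanSpace ℝ (Fin p) => ‖xj - y‖) (μ ℓ) :=
      DifferentiableAt.norm ℝ ((differentiableAt_const xj).sub differentiableAt_id)
        (sub_ne_zero.mpr (hx ℓ))
    have hproj : HasFDerivAt (𝕜 := ℝ) (fun μ' : Fin K → EuclideanSpace ℝ (Fin p) => μ' ℓ)
        (ContinuousLinearMap.proj ℓ) μ := hasFDerivAt_apply ℓ μ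
    exact HasFDerivAt.comp (g := fun y : EuclideanSpace ℝ (Fin p) => ‖xj - y‖) μ hd.hasFDerivAt hproj
  have hE : ∀ ℓ, HasFDerivAt (fun μ' : Fin K → EuclideanSpace ℝ (Fin p) => Real.exp (-β * ‖xj - μ' ℓ‖))
      (Real.exp (-β * ‖xj - μ ℓ‖) • ((-β) • Ψ ℓ)) μ := fun ℓ => ((hg ℓ).const_mul (-β)).exp
  set S : ℝ := ∑ ℓ, Real.exp (-β * ‖xj - μ ℓ‖) with hSdef
  have hS0 : 0 < S := Finset.sum_pos (fun ℓ _ => Real.exp_pos _) Finset.univ_nonempty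
  have hSd : HasFDerivAt (fun μ' : Fin K → EuclideanSpace ℝ (Fin p) => ∑ ℓ, Real.exp (-β * ‖xj - μ' ℓ‖))
      (∑ ℓ, Real.exp (-β * ‖xj - μ ℓ‖) • ((-β) • Ψ ℓ)) μ :=
    HasFDerivAt.fun_sum fun ℓ _ => hE ℓ
  have hr := myDiv (hE i) hSd (ne_of_gt hS0)
  refine ⟨_, hr, ?_⟩
  -- evaluate the derivative at v
  have hψ0 : ∀ ℓ, ℓ ≠ k → Ψ ℓ v = 0 := by
    intro ℓ hℓ
    simp [hΨ, hv, Pi.single_eq_of_ne hℓ]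
  have hψk : |Ψ k v| ≤ 1 := by
    have h1 : ‖fderiv ℝ (fun y : EuclideanSpace ℝ (Fin p) => ‖xj - y‖) (μ k)‖ ≤ 1 := by
      simpa using norm_fderiv_le_of_lipschitz ℝ (myLip xj)
    have : |Ψ k v| ≤ ‖fderiv ℝ (fun y : EuclideanSpace ℝ (Fin p) => ‖xj - y‖) (μ k)‖ * ‖v k‖ := by
      simpa [hΨ, Real.norm_eq_abs] using
        (fderiv ℝ (fun y : EuclideanSpace ℝ (Fin p) => ‖xj - y‖) (μ k)).le_opNorm (v k)
    have hvk : ‖v k‖ = 1 := by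
      simp [hv, Pi.single_eq_same, EuclideanSpace.norm_single]
    calc |Ψ k v| ≤ _ * ‖v k‖ := this
    _ ≤ 1 := by rw [hvk, mul_one]; exact h1
  have hsum : (∑ ℓ, Real.exp (-β * ‖xj - μ ℓ‖) • ((-β) • Ψ ℓ)) v =
      Real.exp (-β * ‖xj - μ k‖) * (-β * Ψ k v) := by
    rw [ContinuousLinearMap.sum_apply, Finset.sum_eq_single k]
    · simp [smul_eq_mul]
    · intro b _ hb; simp [hψ0 b hb]
    · simp
  rw [ContinuousLinearMap.add_apply, ContinuousLinearMap.smul_apply,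
    ContinuousLinearMap.smul_apply, ContinuousLinearMap.smul_apply,
    ContinuousLinearMap.smul_apply, hsum]
  set ei := Real.exp (-β * ‖xj - μ i‖) with hei
  set ek := Real.exp (-β * ‖xj - μ k‖) with hek
  have heipos : 0 < ei := Real.exp_pos _
  have hekpos : 0 < ek := Real.exp_pos _
  have heile : ei ≤ S := by
    rw [hSdef]
    exact Finset.single_le_sum (f := fun ℓ => Real.exp (-β * ‖xj - μ ℓ‖))
      (fun ℓ _ => (Real.exp_pos _).le) (Finset.mem_univ i)
  have hbs : |(-β) * Ψ k v| ≤ β := by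
    rw [abs_mul, abs_neg, abs_of_nonneg hβ.le]
    exact mul_le_of_le_one_right hβ.le hψk
  by_cases hik : i = k
  · subst hik
    simp only [ContinuousLinearMap.smul_apply, smul_eq_mul, ← hSdef, if_pos rfl]
    have hekei : ek = ei := by rw [hek, hei]
    rw [hekei]
    have h1 : (0:ℝ) ≤ ei / S := by positivity
    have h2 : (0:ℝ) ≤ 1 - ei / S := by
      rw [sub_nonneg]; exact div_le_one_of_le₀ heile hS0.le
    calc |ei * (-(S ^ 2)⁻¹ * (ei * (-β * (Ψ i) v))) + S⁻¹ * (ei * (-β * (Ψ i) v))|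
        = |(-β * (Ψ i) v) * (ei / S * (1 - ei / S))| := by
          rw [show ei * (-(S ^ 2)⁻¹ * (ei * (-β * (Ψ i) v))) + S⁻¹ * (ei * (-β * (Ψ i) v))
              = (-β * (Ψ i) v) * (ei / S * (1 - ei / S)) from by
            field_simp
            ring]
      _ = |(-β * (Ψ i) v)| * (ei / S * (1 - ei / S)) := by
          rw [abs_mul, abs_of_nonneg (mul_nonneg h1 h2)]
      _ ≤ β * (ei / S * (1 - ei / S)) := by
          exact mul_le_mul_of_nonneg_right hbs (mul_nonneg h1 h2)
      _ = β * (ei / S * |1 - ei / S|) := by rw [abs_of_nonneg h2]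
  · have hΨi : (Ψ i) v = 0 := hψ0 i hik
    simp only [ContinuousLinearMap.smul_apply, smul_eq_mul, ← hSdef, if_neg hik, hΨi]
    have h1 : (0:ℝ) ≤ ek / S * (ei / S) := by positivity
    calc |ei * (-(S ^ 2)⁻¹ * (ek * (-β * (Ψ k) v))) + S⁻¹ * (ei * (-β * 0))|
        = |(-β * (Ψ k) v) * -(ek / S * (ei / S))| := by
          rw [show ei * (-(S ^ 2)⁻¹ * (ek * (-β * (Ψ k) v))) + S⁻¹ * (ei * (-β * 0))
              = (-β * (Ψ k) v) * -(ek / S * (ei / S)) from by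
            field_simp
            ring]
      _ = |(-β * (Ψ k) v)| * (ek / S * (ei / S)) := by
          rw [abs_mul, abs_neg, abs_of_nonneg h1]
      _ ≤ β * (ek / S * (ei / S)) := mul_le_mul_of_nonneg_right hbs h1
      _ = β * (ek / S * |0 - ei / S|) := by
          rw [zero_sub, abs_neg, abs_of_nonneg (by positivity : (0:ℝ) ≤ ei / S)]


/-- **Diagonal approximation of the soft-`k`-means Jacobian (with temperature condition).**
Let `x_1, …, x_n, μ_1, …, μ_K ∈ ℝ^p` with `x j ≠ μ k`, `β > 0`, soft assignments
`r μ' j k = exp (-β‖x j - μ' k‖) / ∑ ℓ, exp (-β‖x j - μ' ℓ‖)` (Euclidean norm),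
and `f μ' i ℓ = μ' i ℓ - (∑ j, r μ' j i * x j ℓ) / (∑ j, r μ' j i)`.
Assume `‖x j‖₁ ≤ 1`; that `‖x j - μ i‖ - ‖x j - μ (c j)‖ ≥ δ` for all
`i ≠ c j`, where `c j` is the argmax of `r μ j ·`; that `∑ j, r μ j i ≥ α n`
for all `i`; and that `βδ > log (2βK²/α)`.  Then the Jacobian `J = ∂f/∂μ`
(a `(Kp) × (Kp)` matrix) satisfies
`‖J - I‖₁ ≤ exp (-δβ) * K²β / (α/2 - K²β exp (-δβ))`, where the operator
1-norm is the maximum over columns of the column's absolute sum. -/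
theorem soft_kmeans_jacobian_near_identity
    (n K p : ℕ)
    (x : Fin n → EuclideanSpace ℝ (Fin p))
    (μ : Fin K → EuclideanSpace ℝ (Fin p))
    (β δ α : ℝ) (hβ : 0 < β) (hδ : 0 < δ) (hα : 0 < α)
    (hxμ : ∀ j k, x j ≠ μ k)
    (r : (Fin K → EuclideanSpace ℝ (Fin p)) → Fin n → Fin K → ℝ)
    (hr : r = fun μ' j k =>
      Real.exp (-β * ‖x j - μ' k‖) / ∑ ℓ, Real.exp (-β * ‖x j - μ' ℓ‖))
    (f : (Fin K → EuclideanSpace ℝ (Fin p)) → Fin K → Fin p → ℝ)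
    (hf : f = fun μ' i ℓ =>
      μ' i ℓ - (∑ j, r μ' j i * x j ℓ) / (∑ j, r μ' j i))
    (hx1 : ∀ j, ∑ ℓ, |x j ℓ| ≤ 1)
    (c : Fin n → Fin K)
    (hc : ∀ j k, r μ j k ≤ r μ j (c j))
    (hsep : ∀ j i, i ≠ c j → ‖x j - μ i‖ - ‖x j - μ (c j)‖ ≥ δ)
    (hbal : ∀ i, (∑ j, r μ j i) ≥ α * n)
    (htemp : β * δ > Real.log (2 * β * K ^ 2 / α))
    (J : Matrix (Fin K × Fin p) (Fin K × Fin p) ℝ)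
    (hJ : ∀ i ℓ k m, J (i, ℓ) (k, m) =
      fderiv ℝ (fun μ' => f μ' i ℓ) μ (Pi.single k (EuclideanSpace.single m 1))) :
    ∀ col : Fin K × Fin p,
      ∑ row : Fin K × Fin p, |(J - 1) row col| ≤
        Real.exp (-δ * β) *
          (K ^ 2 * β / (α / 2 - K ^ 2 * β * Real.exp (-δ * β))) := by
  intro col
  obtain ⟨k, m⟩ := col
  haveI hne : Nonempty (Fin K) := ⟨k⟩
  have hK0 : 0 < K := k.pos
  have hKR : (1:ℝ) ≤ (K:ℝ) := by exact_mod_cast hK0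
  subst hr
  subst hf
  beta_reduce at hJ hc hbal
  set q := Real.exp (-δ * β) with hqdef
  have hq0 : 0 < q := Real.exp_pos _
  have hKq : (K:ℝ)^2 * β * q < α/2 := by
    have hpos : (0:ℝ) < 2 * β * (K:ℝ)^2 / α := by positivity
    have h1 : 2 * β * (K:ℝ)^2 / α < Real.exp (β * δ) := by
      rw [← Real.exp_log hpos]; exact Real.exp_lt_exp.mpr htemp
    have h2 : 2 * β * (K:ℝ)^2 < Real.exp (β * δ) * α := (div_lt_iff₀ hα).mp h1
    have hq1 : q * Real.exp (β * δ) = 1 := by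
      rw [hqdef, ← Real.exp_add]
      rw [show -δ * β + β * δ = 0 by ring, Real.exp_zero]
    nlinarith [Real.exp_pos (β * δ)]
  have hden : 0 < α/2 - (K:ℝ)^2 * β * q := by linarith
  have hRHS0 : (0:ℝ) ≤ q * ((K:ℝ)^2 * β / (α/2 - (K:ℝ)^2*β*q)) := by positivity
  have hident : ∀ (i : Fin K) (ℓ : Fin p),
      (Pi.single k (EuclideanSpace.single m (1:ℝ)) : Fin K → EuclideanSpace ℝ (Fin p)) i ℓ =
      (1 : Matrix (Fin K × Fin p) (Fin K × Fin p) ℝ) (i,ℓ) (k,m) := by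
    intro i ℓ
    rw [Matrix.one_apply]
    by_cases hik : i = k
    · subst hik; rw [Pi.single_eq_same]
      by_cases hlm : ℓ = m
      · subst hlm; simp [EuclideanSpace.single_apply]
      · simp [EuclideanSpace.single_apply, hlm, Prod.ext_iff]
    · rw [Pi.single_eq_of_ne hik]
      simp [Prod.ext_iff, hik]
  rcases Nat.eq_zero_or_pos n with hn | hn
  · subst hn
    simp only [Finset.univ_eq_empty, Finset.sum_empty, zero_div, sub_zero] at hJ
    have hzero : ∀ i ℓ, (J - 1) (i, ℓ) (k, m) = 0 := by
      intro i ℓ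
      have hproj : HasFDerivAt (𝕜 := ℝ)
          (fun μ' : Fin K → EuclideanSpace ℝ (Fin p) => μ' i ℓ)
          ((EuclideanSpace.proj (𝕜 := ℝ) ℓ).comp (ContinuousLinearMap.proj i)) μ :=
        (EuclideanSpace.proj (𝕜 := ℝ) ℓ).hasFDerivAt.comp μ (hasFDerivAt_apply i μ)
      rw [Matrix.sub_apply, hJ i ℓ k m, hproj.fderiv, ← hident i ℓ]
      simp [ContinuousLinearMap.comp_apply]
    rw [Finset.sum_eq_zero (fun row _ => by obtain ⟨i, ℓ⟩ := row; rw [hzero i ℓ, abs_zero])]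
    exact hRHS0
  · -- main case
    have hn0 : (0:ℝ) < (n:ℝ) := by exact_mod_cast hn
    choose L hL hLb using fun (j : Fin n) (i : Fin K) =>
      aux_r (x j) μ β hβ (fun ℓ => hxμ j ℓ) k i m
    set v : Fin K → EuclideanSpace ℝ (Fin p) :=
      Pi.single k (EuclideanSpace.single m (1:ℝ)) with hv
    set ρ : Fin n → Fin K → ℝ := fun j i =>
      Real.exp (-β * ‖x j - μ i‖) / ∑ ℓ, Real.exp (-β * ‖x j - μ ℓ‖) with hρ
    have hS0 : ∀ j, (0:ℝ) < ∑ ℓ, Real.exp (-β * ‖x j - μ ℓ‖) :=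
      fun j => Finset.sum_pos (fun ℓ _ => Real.exp_pos _) Finset.univ_nonempty
    have hρ0 : ∀ j i, 0 ≤ ρ j i := fun j i => div_nonneg (Real.exp_pos _).le (hS0 j).le
    have hρ1 : ∀ j i, ρ j i ≤ 1 := fun j i => div_le_one_of_le₀
      (Finset.single_le_sum (f := fun ℓ => Real.exp (-β * ‖x j - μ ℓ‖))
        (fun ℓ _ => (Real.exp_pos _).le) (Finset.mem_univ i)) (hS0 j).le
    have hqle : ∀ j i, i ≠ c j → ρ j i ≤ q := by
      intro j i hic
      have h1 : Real.exp (-β * ‖x j - μ i‖) ≤ q * Real.exp (-β * ‖x j - μ (c j)‖) := by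
        rw [hqdef, ← Real.exp_add]
        apply Real.exp_le_exp.mpr
        have h2 := hsep j i hic
        nlinarith
      calc ρ j i ≤ (q * Real.exp (-β * ‖x j - μ (c j)‖)) / ∑ ℓ, Real.exp (-β * ‖x j - μ ℓ‖) := by
            simp only [hρ]
            gcongr
        _ = q * ρ j (c j) := by rw [hρ, mul_div_assoc]
        _ ≤ q * 1 := by gcongr; exact hρ1 j (c j)
        _ = q := mul_one q
    have hsum1 : ∀ j, ∑ i, ρ j i = 1 := by
      intro j
      rw [hρ]
      rw [← Finset.sum_div, div_self (hS0 j).ne']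
    have h1sub : ∀ j, 1 - ρ j (c j) ≤ (K:ℝ) * q := by
      intro j
      have he : ρ j (c j) + ∑ i ∈ Finset.univ.erase (c j), ρ j i = 1 := by
        rw [Finset.add_sum_erase _ _ (Finset.mem_univ (c j))]
        exact hsum1 j
      have hb : ∑ i ∈ Finset.univ.erase (c j), ρ j i ≤
          ∑ i ∈ Finset.univ.erase (c j), q :=
        Finset.sum_le_sum (fun i hi => hqle j i (Finset.ne_of_mem_erase hi))
      have hcard : ∑ i ∈ Finset.univ.erase (c j), q ≤ (K:ℝ) * q := by
        rw [Finset.sum_const, nsmul_eq_mul]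
        have : ((Finset.univ.erase (c j)).card : ℝ) ≤ (K:ℝ) := by
          have := Finset.card_le_univ (Finset.univ.erase (c j))
          simp only [Finset.card_univ, Fintype.card_fin] at this
          exact_mod_cast this
        exact mul_le_mul_of_nonneg_right this hq0.le
      linarith
    have hKq' : q ≤ (K:ℝ) * q := le_mul_of_one_le_left hq0.le hKR
    have hclaim : ∀ j i, ρ j k * |(if i = k then (1:ℝ) else 0) - ρ j i| ≤ (K:ℝ) * q := by
      intro j i
      by_cases hik : i = k
      · subst hik
        rw [if_pos rfl, abs_of_nonneg (sub_nonneg.mpr (hρ1 j i))]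
        by_cases hkc : i = c j
        · subst hkc
          calc ρ j (c j) * (1 - ρ j (c j)) ≤ 1 * ((K:ℝ) * q) :=
                mul_le_mul (hρ1 j (c j)) (h1sub j) (by linarith [hρ1 j (c j)]) zero_le_one
            _ = (K:ℝ) * q := one_mul _
        · calc ρ j i * (1 - ρ j i) ≤ q * 1 :=
                mul_le_mul (hqle j i hkc) (by linarith [hρ0 j i]) (by linarith [hρ1 j i]) hq0.le
            _ = q := mul_one q
            _ ≤ (K:ℝ) * q := hKq'
      · rw [if_neg hik, zero_sub, abs_neg, abs_of_nonneg (hρ0 j i)]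
        by_cases hkc : k = c j
        · have hic : i ≠ c j := by rw [← hkc]; exact hik
          calc ρ j k * ρ j i ≤ 1 * q :=
                mul_le_mul (hρ1 j k) (hqle j i hic) (hρ0 j i) zero_le_one
            _ = q := one_mul q
            _ ≤ (K:ℝ) * q := hKq'
        · calc ρ j k * ρ j i ≤ q * 1 :=
                mul_le_mul (hqle j k hkc) (hρ1 j i) (hρ0 j i) hq0.le
            _ = q := mul_one q
            _ ≤ (K:ℝ) * q := hKq'
    have hLv : ∀ j i, |L j i v| ≤ β * ((K:ℝ) * q) := by
      intro j i
      refine (hLb j i).trans ?_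
      exact mul_le_mul_of_nonneg_left (hclaim j i) hβ.le
    have hDd0 : ∀ i, (0:ℝ) < ∑ j, ρ j i := by
      intro i
      calc (0:ℝ) < α * n := by positivity
        _ ≤ ∑ j, ρ j i := hbal i
    have hJval : ∀ (i : Fin K) (ℓ : Fin p), (J - 1) (i, ℓ) (k, m) =
        -((∑ j, ρ j i * x j ℓ) * (-((∑ j, ρ j i) ^ 2)⁻¹ * (∑ j, L j i v)) +
          (∑ j, ρ j i)⁻¹ * (∑ j, x j ℓ * L j i v)) := by
      intro i ℓ
      have hNum : HasFDerivAt (fun μ' : Fin K → EuclideanSpace ℝ (Fin p) =>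
          ∑ j, (Real.exp (-β * ‖x j - μ' i‖) / ∑ ℓ', Real.exp (-β * ‖x j - μ' ℓ'‖)) * x j ℓ)
          (∑ j, x j ℓ • L j i) μ :=
        HasFDerivAt.fun_sum (fun j _ => (hL j i).mul_const (x j ℓ))
      have hDen : HasFDerivAt (fun μ' : Fin K → EuclideanSpace ℝ (Fin p) =>
          ∑ j, Real.exp (-β * ‖x j - μ' i‖) / ∑ ℓ', Real.exp (-β * ‖x j - μ' ℓ'‖))
          (∑ j, L j i) μ := HasFDerivAt.fun_sum (fun j _ => hL j i)
      have hdiv := myDiv hNum hDen (hDd0 i).ne'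
      have hproj : HasFDerivAt (𝕜 := ℝ) (fun μ' : Fin K → EuclideanSpace ℝ (Fin p) => μ' i ℓ)
          ((EuclideanSpace.proj (𝕜 := ℝ) ℓ).comp (ContinuousLinearMap.proj i)) μ :=
        (EuclideanSpace.proj (𝕜 := ℝ) ℓ).hasFDerivAt.comp μ (hasFDerivAt_apply i μ)
      have hfi := hproj.fun_sub hdiv
      rw [Matrix.sub_apply, hJ i ℓ k m, hfi.fderiv]
      simp only [ContinuousLinearMap.sub_apply, ContinuousLinearMap.add_apply,
        ContinuousLinearMap.smul_apply, ContinuousLinearMap.coe_sum', Finset.sum_apply,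
        ContinuousLinearMap.comp_apply, ContinuousLinearMap.proj_apply, smul_eq_mul]
      have hid := hident i ℓ
      simp only [hv] at hid
      simp only [hρ, hv, PiLp.proj_apply]
      rw [hid]
      ring
    set Cq := β * ((K:ℝ) * q) with hCq
    have hCq0 : 0 ≤ Cq := by positivity
    have hB : ∀ i, |∑ j, L j i v| ≤ n * Cq := by
      intro i
      calc |∑ j, L j i v| ≤ ∑ j, |L j i v| := Finset.abs_sum_le_sum_abs _ _
        _ ≤ ∑ j : Fin n, Cq := Finset.sum_le_sum fun j _ => hLv j i
        _ = n * Cq := by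
          rw [Finset.sum_const, Finset.card_univ, Fintype.card_fin, nsmul_eq_mul]
    have hA : ∀ i, ∑ ℓ, |∑ j, x j ℓ * L j i v| ≤ n * Cq := by
      intro i
      calc ∑ ℓ, |∑ j, x j ℓ * L j i v|
          ≤ ∑ ℓ, ∑ j, |x j ℓ| * |L j i v| := by
            refine Finset.sum_le_sum fun ℓ _ => ?_
            refine (Finset.abs_sum_le_sum_abs _ _).trans ?_
            refine le_of_eq (Finset.sum_congr rfl fun j _ => abs_mul _ _)
        _ = ∑ j, ∑ ℓ, |x j ℓ| * |L j i v| := Finset.sum_comm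
        _ = ∑ j, (∑ ℓ, |x j ℓ|) * |L j i v| := by
            refine Finset.sum_congr rfl fun j _ => ?_
            rw [Finset.sum_mul]
        _ ≤ ∑ j : Fin n, 1 * Cq := by
            refine Finset.sum_le_sum fun j _ => ?_
            exact mul_le_mul (hx1 j) (hLv j i) (abs_nonneg _) zero_le_one
        _ = n * Cq := by
          rw [Finset.sum_const, Finset.card_univ, Fintype.card_fin, nsmul_eq_mul, one_mul]
    have hNb : ∀ i, ∑ ℓ, |∑ j, ρ j i * x j ℓ| ≤ ∑ j, ρ j i := by
      intro i
      calc ∑ ℓ, |∑ j, ρ j i * x j ℓ|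
          ≤ ∑ ℓ, ∑ j, ρ j i * |x j ℓ| := by
            refine Finset.sum_le_sum fun ℓ _ => ?_
            refine (Finset.abs_sum_le_sum_abs _ _).trans ?_
            refine le_of_eq (Finset.sum_congr rfl fun j _ => ?_)
            rw [abs_mul, abs_of_nonneg (hρ0 j i)]
        _ = ∑ j, ρ j i * ∑ ℓ, |x j ℓ| := by
            rw [Finset.sum_comm]
            exact Finset.sum_congr rfl fun j _ => by rw [Finset.mul_sum]
        _ ≤ ∑ j, ρ j i * 1 := by
            refine Finset.sum_le_sum fun j _ => ?_
            exact mul_le_mul_of_nonneg_left (hx1 j) (hρ0 j i)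
        _ = ∑ j, ρ j i := by simp
    have hrow : ∀ i, ∑ ℓ, |(J - 1) (i, ℓ) (k, m)| ≤ 2 * Cq / α := by
      intro i
      have hDd := hDd0 i
      have hDdbal : α * n ≤ ∑ j, ρ j i := hbal i
      have h1 : ∀ ℓ, |(J - 1) (i, ℓ) (k, m)| ≤
          |∑ j, ρ j i * x j ℓ| * (((∑ j, ρ j i) ^ 2)⁻¹ * (n * Cq)) +
          (∑ j, ρ j i)⁻¹ * |∑ j, x j ℓ * L j i v| := by
        intro ℓ
        rw [hJval i ℓ, abs_neg]
        refine (abs_add_le _ _).trans ?_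
        have e1 : |(∑ j, ρ j i * x j ℓ) * (-((∑ j, ρ j i) ^ 2)⁻¹ * (∑ j, L j i v))|
            = |∑ j, ρ j i * x j ℓ| * (((∑ j, ρ j i) ^ 2)⁻¹ * |∑ j, L j i v|) := by
          rw [abs_mul, abs_mul, abs_neg, abs_inv, abs_pow, abs_of_pos hDd]
        have e2 : |(∑ j, ρ j i)⁻¹ * (∑ j, x j ℓ * L j i v)|
            = (∑ j, ρ j i)⁻¹ * |∑ j, x j ℓ * L j i v| := by
          rw [abs_mul, abs_inv, abs_of_pos hDd]
        rw [e1, e2]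
        gcongr
        all_goals first | exact hB i | positivity
      calc ∑ ℓ, |(J - 1) (i, ℓ) (k, m)|
          ≤ ∑ ℓ, (|∑ j, ρ j i * x j ℓ| * (((∑ j, ρ j i) ^ 2)⁻¹ * (n * Cq)) +
              (∑ j, ρ j i)⁻¹ * |∑ j, x j ℓ * L j i v|) := Finset.sum_le_sum fun ℓ _ => h1 ℓ
        _ = (∑ ℓ, |∑ j, ρ j i * x j ℓ|) * (((∑ j, ρ j i) ^ 2)⁻¹ * (n * Cq)) +
            (∑ j, ρ j i)⁻¹ * (∑ ℓ, |∑ j, x j ℓ * L j i v|) := by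
            rw [Finset.sum_add_distrib, ← Finset.sum_mul, ← Finset.mul_sum]
        _ ≤ (∑ j, ρ j i) * (((∑ j, ρ j i) ^ 2)⁻¹ * (n * Cq)) +
            (∑ j, ρ j i)⁻¹ * (n * Cq) := by
            gcongr
            all_goals first | exact hNb i | exact hA i | positivity
        _ = 2 * (n * Cq) / (∑ j, ρ j i) := by field_simp; ring
        _ ≤ 2 * (n * Cq) / (α * n) := by
            gcongr
            all_goals first | exact hDdbal | positivity
        _ = 2 * Cq / α := by
            rw [div_eq_div_iff (by positivity) (by positivity)]
            ring
    calc ∑ row : Fin K × Fin p, |(J - 1) row (k, m)|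
        = ∑ i, ∑ ℓ, |(J - 1) (i, ℓ) (k, m)| := by rw [Fintype.sum_prod_type]
      _ ≤ ∑ _i : Fin K, 2 * Cq / α := Finset.sum_le_sum fun i _ => hrow i
      _ = K * (2 * Cq / α) := by
          rw [Finset.sum_const, Finset.card_univ, Fintype.card_fin, nsmul_eq_mul]
      _ = q * ((K:ℝ) ^ 2 * β / (α / 2)) := by
          rw [hCq]
          field_simp
      _ ≤ q * ((K:ℝ) ^ 2 * β / (α / 2 - (K:ℝ) ^ 2 * β * q)) := by
          refine mul_le_mul_of_nonneg_left ?_ hq0.le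
          gcongr
          all_goals first
            | positivity
            | linarith [mul_nonneg (mul_nonneg (sq_nonneg ((K:ℝ))) hβ.le) hq0.le]
end

section
/- Let s ∈ ℝ^K, let r = softmax(s) (i.e., r_i = exp(s_i)/∑_{ℓ} exp(s_ℓ)), and let m = argmax_i s_i. Suppose s_m − s_k ≥ βδ for all k ≠ m, where β, δ > 0. Then every entry of the softmax Jacobian is small: for all indices i and k, |∂r_i/∂s_k| ≤ K·exp(−βδ), where ∂r_i/∂s_k equals r_i(1 − r_i) if i = k and −r_i·r_k if i ≠ k. -/
/-!
Write `E = exp (-(β * δ))`. Dividing by the partition function only shrinks `exp (s k)` below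
`exp (s k) / exp (s m) = exp (s k - s m) ≤ E` for `k ≠ m`, so every non-maximal probability is at
most `E`, and the maximal one misses `1` by their sum, at most `K * E`. Each Jacobian entry is a
product `r i * r k` or `r i * (1 - r i)` of numbers in `[0, 1]`, one factor of which is always a
non-maximal probability or `1 - r m`.
-/

open Real Finset

section Softmax

variable {ι : Type*} [Fintype ι]

noncomputable def softmax (s : ι → ℝ) (i : ι) : ℝ :=
  exp (s i) / ∑ ℓ, exp (s ℓ)

theorem softmax_nonneg (s : ι → ℝ) (i : ι) : 0 ≤ softmax s i := by
  unfold softmax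
  positivity

theorem exp_le_sum_exp (s : ι → ℝ) (i : ι) : exp (s i) ≤ ∑ ℓ, exp (s ℓ) :=
  single_le_sum (fun ℓ _ => (exp_pos (s ℓ)).le) (mem_univ i)

theorem sum_exp_pos (s : ι → ℝ) (i : ι) : 0 < ∑ ℓ, exp (s ℓ) :=
  (exp_pos (s i)).trans_le (exp_le_sum_exp s i)

theorem softmax_le_one (s : ι → ℝ) (i : ι) : softmax s i ≤ 1 :=
  (div_le_one (sum_exp_pos s i)).mpr (exp_le_sum_exp s i)

theorem sum_softmax [Nonempty ι] (s : ι → ℝ) : ∑ i, softmax s i = 1 := by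
  obtain ⟨i⟩ := ‹Nonempty ι›
  simp only [softmax, ← sum_div]
  exact div_self (sum_exp_pos s i).ne'

theorem softmax_le_exp_sub (s : ι → ℝ) (i j : ι) : softmax s i ≤ exp (s i - s j) := by
  rw [exp_sub]
  exact div_le_div_of_nonneg_left (exp_pos _).le (exp_pos _) (exp_le_sum_exp s j)

variable [DecidableEq ι]

theorem one_sub_softmax_eq_sum_erase (s : ι → ℝ) (m : ι) :
    1 - softmax s m = ∑ k ∈ univ.erase m, softmax s k := by
  have : Nonempty ι := ⟨m⟩
  rw [← sum_softmax s, ← add_sum_erase _ _ (mem_univ m), add_sub_cancel_left]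

theorem one_sub_softmax_le_card_mul_exp {s : ι → ℝ} {m : ι} {c : ℝ}
    (hgap : ∀ k, k ≠ m → s m - s k ≥ c) :
    1 - softmax s m ≤ Fintype.card ι * exp (-c) := by
  rw [one_sub_softmax_eq_sum_erase]
  calc ∑ k ∈ univ.erase m, softmax s k
      ≤ (univ.erase m).card • exp (-c) := by
        refine sum_le_card_nsmul _ _ _ fun k hk => ?_
        refine (softmax_le_exp_sub s k m).trans (exp_le_exp.mpr ?_)
        linarith [hgap k (ne_of_mem_erase hk)]
    _ ≤ Fintype.card ι * exp (-c) := by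
        rw [nsmul_eq_mul]
        gcongr
        exact_mod_cast (card_erase_le).trans_eq (card_univ)

end Softmax

section Jacobian

variable {ι : Type*} [DecidableEq ι]

def softmaxJacobian (r : ι → ℝ) (i k : ι) : ℝ :=
  if i = k then r i * (1 - r i) else -(r i * r k)

theorem abs_softmaxJacobian_le {r : ι → ℝ} {m : ι} {ε : ℝ}
    (h0 : ∀ i, 0 ≤ r i) (h1 : ∀ i, r i ≤ 1)
    (hsmall : ∀ k, k ≠ m → r k ≤ ε) (hmax : 1 - r m ≤ ε) (i k : ι) :
    |softmaxJacobian r i k| ≤ ε := by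
  have hi0 := h0 i
  have hi1 := h1 i
  unfold softmaxJacobian
  split_ifs with hik
  · rw [abs_of_nonneg (mul_nonneg hi0 (sub_nonneg.mpr hi1))]
    by_cases him : i = m
    · subst him
      nlinarith
    · nlinarith [hsmall i him]
  · rw [abs_neg, abs_of_nonneg (mul_nonneg hi0 (h0 k))]
    by_cases him : i = m
    · have hkm : k ≠ m := fun hkm => hik (him.trans hkm.symm)
      nlinarith [hsmall k hkm, h0 k]
    · nlinarith [hsmall i him, h0 k, h1 k]

end Jacobian

theorem softmax_jacobian_entry_bound_general
    (K : ℕ) (s : Fin K → ℝ)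
    (r : Fin K → ℝ)
    (hr : ∀ i, r i = Real.exp (s i) / ∑ ℓ, Real.exp (s ℓ))
    (m : Fin K)
    (β δ : ℝ)
    (hgap : ∀ k, k ≠ m → s m - s k ≥ β * δ) :
    ∀ i k : Fin K,
      |if i = k then r i * (1 - r i) else -(r i * r k)| ≤ K * Real.exp (-(β * δ)) := by
  obtain rfl : r = softmax s := funext hr
  have hK : (1 : ℝ) ≤ K := by exact_mod_cast m.pos
  have hsmall (k : Fin K) (hk : k ≠ m) : softmax s k ≤ K * exp (-(β * δ)) :=
    calc softmax s k ≤ exp (s k - s m) := softmax_le_exp_sub s k m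
      _ ≤ exp (-(β * δ)) := exp_le_exp.mpr (by linarith [hgap k hk])
      _ ≤ K * exp (-(β * δ)) := le_mul_of_one_le_left (exp_pos _).le hK
  have hmax := one_sub_softmax_le_card_mul_exp hgap
  rw [Fintype.card_fin] at hmax
  exact abs_softmaxJacobian_le (softmax_nonneg s) (softmax_le_one s) hsmall hmax

/-- **Softmax Jacobian entries are exponentially small under a score gap.**
Let `s ∈ ℝ^K`, `r = softmax s` (`r i = exp (s i) / ∑ ℓ, exp (s ℓ)`), and let
`m` be the argmax of `s`.  If `s m - s k ≥ βδ` for all `k ≠ m` with `β, δ > 0`,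
then every entry of the softmax Jacobian — which equals `r i * (1 - r i)` on
the diagonal (`i = k`) and `-(r i * r k)` off it — has absolute value at most
`K * exp (-βδ)`. -/
theorem softmax_jacobian_entry_bound
    (K : ℕ) (s : Fin K → ℝ)
    (r : Fin K → ℝ)
    (hr : ∀ i, r i = Real.exp (s i) / ∑ ℓ, Real.exp (s ℓ))
    (m : Fin K) (hm : ∀ k, s k ≤ s m)
    (β δ : ℝ) (hβ : 0 < β) (hδ : 0 < δ)
    (hgap : ∀ k, k ≠ m → s m - s k ≥ β * δ) :
    ∀ i k : Fin K,
      |if i = k then r i * (1 - r i) else -(r i * r k)| ≤ K * Real.exp (-(β * δ)) :=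
  softmax_jacobian_entry_bound_general K s r hr m β δ hgap
end
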